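/- Let (R,σ) be an assignment for (H',v₀). If σ(v₀) ≠ ⊥, then Player 2 has a winning strategy in the game 𝒢(H',v₀), i.e. the initial position v₀ e₀ is a loss for the player to move. -/

import Mathlib

/-!
Hypergraphs are represented by their incidence graphs: a hypergraph on a (finite) set
`V` of hypervertices and a (finite) set `E` of hyperedges is given by its incidence
relation `Inc : V → E → Prop` (every hyperedge being incident to at least one
hypervertex).
-/

/-- A strong cycle of the hypergraph `Inc`, with `m` (pairwise distinct) hypervertices
`v i` and `m` (pairwise distinct) hyperedges `e i`, indexed cyclically; as a cycle
`v 0, e 0, v 1, e 1, …` of the incidence graph it has length `2m`.  Strongness means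
that the subgraph of the incidence graph induced by the entries of the cycle contains
exactly the consecutive incidences: `v i` is incident to `e j` iff `i = j` or
`i = j + 1`. -/
def IsStrongCycle {V E : Type} (Inc : V → E → Prop) (m : ℕ)
    (v : ZMod m → V) (e : ZMod m → E) : Prop :=
  Function.Injective v ∧ Function.Injective e ∧
    ∀ i j : ZMod m, Inc (v i) (e j) ↔ (i = j ∨ i = j + 1)

/-- The hypergraph `Inc` is balanced: it has no strong cycle of length `4k + 2` for an
integer `k ≥ 1`, i.e. (the incidence graph being bipartite) no strong cycle with an odd
number `m ≥ 3` of hyperedges. -/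
def BalancedInc {V E : Type} (Inc : V → E → Prop) : Prop :=
  ∀ m : ℕ, 3 ≤ m → Odd m → ∀ v : ZMod m → V, ∀ e : ZMod m → E,
    ¬ IsStrongCycle Inc m v e

/-- `M` is a matching of the hypergraph `Inc`: a set of hyperedges splitting `V`, i.e.
every hypervertex is incident to at most one hyperedge of `M`. -/
def IsHyperMatching {V E : Type} (Inc : V → E → Prop) (M : Set E) : Prop :=
  ∀ u : V, {e | e ∈ M ∧ Inc u e}.Subsingleton

/-- `T` is a transversal of the hypergraph `Inc`: a set of hypervertices covering `E`,
i.e. every hyperedge is incident to at least one hypervertex of `T`. -/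
def IsHyperTransversal {V E : Type} (Inc : V → E → Prop) (T : Set V) : Prop :=
  ∀ e : E, ∃ u ∈ T, Inc u e

/-!
Construction of `H'` from a balanced hypergraph `H` (with incidence relation
`Inc : V → E → Prop`) and an independent transversal `U ⊆ V` of `H`: we add two
hypervertices `v₀, v₁`, a hyperedge `e₀` incident exactly to `v₀` and `v₁`, and, for
each `v ∈ U`, a hyperedge `f_v` incident exactly to `v₁` and `v`.  Hypervertices of
`H'` are encoded by `Option (Option V)` (`none` is `v₀`, `some none` is `v₁`,
`some (some v)` is `v ∈ V`) and hyperedges of `H'` by `Option (E ⊕ U)` (`none` is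
`e₀`, `some (Sum.inl e)` is `e ∈ E`, `some (Sum.inr v)` is `f_v` for `v ∈ U`).
-/

/-- The hypervertices of `H'`. -/
abbrev Vh (V : Type) : Type := Option (Option V)

/-- The hyperedges of `H'`. -/
abbrev Eh (V E : Type) (U : Set V) : Type := Option (E ⊕ U)

/-- The added hypervertex `v₀`. -/
def hv0 {V : Type} : Vh V := none

/-- The added hypervertex `v₁`. -/
def hv1 {V : Type} : Vh V := some none

/-- The embedding of a hypervertex of `H` into `H'`. -/
def hemb {V : Type} (v : V) : Vh V := some (some v)

/-- The added hyperedge `e₀`. -/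
def he0 {V E : Type} {U : Set V} : Eh V E U := none

/-- The embedding of a hyperedge of `H` into `H'`. -/
def origE {V E : Type} {U : Set V} (e : E) : Eh V E U := some (Sum.inl e)

/-- The added hyperedge `f_v`, for `v ∈ U`. -/
def fE {V E : Type} {U : Set V} (v : U) : Eh V E U := some (Sum.inr v)

/-- The incidence relation of `H'`. -/
def IncExt {V E : Type} (Inc : V → E → Prop) (U : Set V) : Vh V → Eh V E U → Prop
  | none, none => True
  | some none, none => True
  | some none, some (Sum.inr _) => True
  | some (some u), some (Sum.inr v) => u = (v : V)
  | some (some u), some (Sum.inl e) => Inc u e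
  | _, _ => False

/-- `N_σ(u)`: the set of hypervertices `v ≠ u` such that `σ(v)` is a hyperedge incident
to `u`. -/
def Nsig {A B : Type} (Inc : A → B → Prop) (σ : A → Option B) (u : A) : Set A :=
  {v | v ≠ u ∧ ∃ e, σ v = some e ∧ Inc u e}

/-- `(R, σ)` is an assignment for the hypergraph `Inc` with distinguished hypervertex
`x₀` (here `σ v = none` encodes `σ(v) = ⊥`). -/
structure IsAssignmentH {A B : Type} (Inc : A → B → Prop) (x0 : A)
    (R : Set A) (σ : A → Option B) : Prop where
  /-- `x₀ ∈ R`. -/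
  mem : x0 ∈ R
  /-- `(C₁)`: for `v ∈ R`, if `σ v = e ∈ E'` then `e` is incident to `v` and every
  hypervertex `u ≠ v` incident to `e` satisfies `u ∈ R` and `σ u = ⊥`. -/
  C1 : ∀ v ∈ R, ∀ e, σ v = some e →
    Inc v e ∧ ∀ u, Inc u e → u ≠ v → u ∈ R ∧ σ u = none
  /-- `(C₂)`: for `v ∈ R`, if `σ v = ⊥` then every hyperedge `e` incident to `v` has
  some incident hypervertex `u` with `u ∈ R` and `σ u ≠ ⊥`. -/
  C2 : ∀ v ∈ R, σ v = none → ∀ e, Inc v e → ∃ u, Inc u e ∧ u ∈ R ∧ σ u ≠ none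
  /-- `(C₃)`, first half: for `v ∈ R`, `|N_σ(v)| ≤ 1`. -/
  C3 : ∀ v ∈ R, (Nsig Inc σ v).Subsingleton
  /-- `(C₃)`, second half: `N_σ(x₀) = ∅`. -/
  C3' : Nsig Inc σ x0 = ∅

/-- The list `L = [(v₀, e₀), (v₁, e₁), …]` (in path order) is a strong path
`v₀ e₀ v₁ e₁ …` of the hypergraph `Inc`: its hypervertices are pairwise distinct, its
hyperedges are pairwise distinct, and the subgraph of the incidence graph induced by
its entries contains exactly the consecutive incidences, i.e. `v i` is incident to
`e j` iff `i = j` or `i = j + 1`. -/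
def IsStrongPathL {A B : Type} (Inc : A → B → Prop) (L : List (A × B)) : Prop :=
  (L.map Prod.fst).Nodup ∧ (L.map Prod.snd).Nodup ∧
    ∀ (i j : ℕ) (hi : i < L.length) (hj : j < L.length),
      (Inc (L.get ⟨i, hi⟩).1 (L.get ⟨j, hj⟩).2 ↔ (i = j ∨ i = j + 1))

/-- Auxiliary fuelled definition of the game value of the game `𝒢(H', v₀)`.  A position
is a strong path `v₀ e₀ v₁ e₁ … v_k e_k`, stored as the list `P` of its pairs
`(v_i, e_i)` in *reverse* order (head `= (v_k, e_k)`); the player to move must choose a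
hypervertex `v` and a hyperedge `e` such that the extended sequence is again a strong
path; a position is a win for the player to move iff some legal move leads to a loss
for the player to move there.  The fuel is (an upper bound on) the number of unused
hypervertices, which decreases by one at each move, so that with fuel equal to the
number of unused hypervertices this is exactly the well-founded definition of the game
value. -/
def winAuxH {A B : Type} (Inc : A → B → Prop) : ℕ → List (A × B) → Prop
  | 0, _ => False
  | n + 1, P => ∃ v e, IsStrongPathL Inc (((v, e) :: P).reverse) ∧
      ¬ winAuxH Inc n ((v, e) :: P)

/-- The position of `𝒢(H', v₀)` given by the strong path whose pairs, in reverse order,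
form the list `P`, is a win for the player to move. -/
def WinPosH {A B : Type} [Fintype A] (Inc : A → B → Prop) (P : List (A × B)) : Prop :=
  winAuxH Inc {a : A | a ∉ P.map Prod.fst}.ncard P

/-!
Player 2 answers a move `v e` of Player 1 by a hypervertex `u ∈ R` incident to `e` with
`σ(u) ≠ ⊥`, which exists by (C₂), together with the hyperedge `σ(u)`. Along such a play
every hypervertex lies in `R`, `v₀` and the hypervertices of Player 2 satisfy
`e_i = σ(v_i)`, and those of Player 1 satisfy `σ(v_i) = ⊥` by (C₁). The answer keeps the
path strong: no earlier hypervertex meets `σ(u)` by (C₁) and (C₃), and if `u` met an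
earlier hyperedge, the last one it meets (of odd index, by (C₁)) would close a strong cycle
with an odd number `≥ 3` of hyperedges that avoids `v₀` and `v₁`, hence lies in `H`.
So Player 2 never runs out of moves.
-/

open Function

theorem List.getI_append_singleton {α : Type*} [Inhabited α] (L : List α) (x : α) :
    (L ++ [x]).getI = update L.getI L.length x := by
  funext i
  rcases lt_trichotomy i L.length with hi | rfl | hi
  · rw [List.getI_append _ _ _ hi, update_of_ne hi.ne]
  · simp [List.getI_append_right]
  · rw [List.getI_eq_default _ (by rw [List.length_append, List.length_singleton]; omega),
      update_of_ne hi.ne', List.getI_eq_default _ hi.le]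

theorem List.getI_map_append_singleton {α β : Type*} [Inhabited β] (f : α → β) (L : List α)
    (x : α) : ((L ++ [x]).map f).getI = update (L.map f).getI L.length (f x) := by
  rw [List.map_append, List.map_singleton, List.getI_append_singleton, List.length_map]

theorem List.nodup_iff_injOn_getI {α : Type*} [Inhabited α] {L : List α} :
    L.Nodup ↔ Set.InjOn L.getI (Set.Iio L.length) := by
  rw [List.nodup_iff_injective_getElem]
  constructor
  · intro h i hi j hj hij
    rw [List.getI_eq_getElem _ hi, List.getI_eq_getElem _ hj] at hij
    exact congrArg Fin.val (@h ⟨i, hi⟩ ⟨j, hj⟩ hij)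
  · intro h i j hij
    refine Fin.ext (h i.2 j.2 ?_)
    rwa [List.getI_eq_getElem _ i.2, List.getI_eq_getElem _ j.2]

section StrongPath

variable {A B : Type} {Inc : A → B → Prop}

def IsStrongPathFn (Inc : A → B → Prop) (n : ℕ) (v : ℕ → A) (e : ℕ → B) : Prop :=
  Set.InjOn v (Set.Iio n) ∧ Set.InjOn e (Set.Iio n) ∧
    ∀ i < n, ∀ j < n, (Inc (v i) (e j) ↔ i = j ∨ i = j + 1)

theorem isStrongPathL_iff [Inhabited A] [Inhabited B] {L : List (A × B)} :
    IsStrongPathL Inc L ↔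
      IsStrongPathFn Inc L.length (L.map Prod.fst).getI (L.map Prod.snd).getI := by
  have hget {C : Type} [Inhabited C] (f : A × B → C) {i : ℕ} (hi : i < L.length) :
      (L.map f).getI i = f L[i] := by
    rw [List.getI_eq_getElem _ (by simpa using hi), List.getElem_map]
  simp only [IsStrongPathL, IsStrongPathFn, List.nodup_iff_injOn_getI, List.length_map]
  refine and_congr_right fun _ => and_congr_right fun _ =>
    ⟨fun h i hi j hj => ?_, fun h i j hi hj => ?_⟩
  · rw [hget _ hi, hget _ hj]; exact h i j hi hj
  · rw [List.get_eq_getElem, List.get_eq_getElem, ← hget Prod.fst hi, ← hget Prod.snd hj]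
    exact h i hi j hj

theorem isStrongPathL_append_singleton_iff [Inhabited A] [Inhabited B] {L : List (A × B)}
    {x : A} {y : B} :
    IsStrongPathL Inc (L ++ [(x, y)]) ↔ IsStrongPathFn Inc (L.length + 1)
      (update (L.map Prod.fst).getI L.length x) (update (L.map Prod.snd).getI L.length y) := by
  rw [isStrongPathL_iff, List.getI_map_append_singleton, List.getI_map_append_singleton,
    List.length_append, List.length_singleton]

theorem IsStrongPathL.notMem_of_append {L : List (A × B)} {x : A} {y : B}
    (h : IsStrongPathL Inc (L ++ [(x, y)])) : x ∉ L.map Prod.fst := by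
  intro hx
  have := h.1
  rw [List.map_append, List.nodup_append] at this
  exact this.2.2 x hx x (by simp) rfl

theorem IsStrongPathFn.update_succ {n : ℕ} {v : ℕ → A} {e : ℕ → B} {x : A} {y : B}
    (h : IsStrongPathFn Inc (n + 1) v e) (hxy : Inc x y) (hxn : Inc x (e n))
    (hx : ∀ j < n, ¬ Inc x (e j)) (hy : ∀ i ≤ n, ¬ Inc (v i) y) :
    IsStrongPathFn Inc (n + 2) (update v (n + 1) x) (update e (n + 1) y) := by
  obtain ⟨hv, he, hinc⟩ := h
  have hxv : ∀ i ≤ n, x ≠ v i := fun i hi hxi => hy i hi (hxi ▸ hxy)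
  have hye : ∀ j ≤ n, y ≠ e j := fun j hj hyj =>
    hy j hj (hyj ▸ (hinc j (by omega) j (by omega)).2 (Or.inl rfl))
  refine ⟨?_, ?_, ?_⟩
  · intro i hi j hj hij
    simp only [Set.mem_Iio, update_apply] at hi hj hij
    split_ifs at hij with h1 h2 h2
    · omega
    · exact absurd hij (hxv j (by omega))
    · exact absurd hij.symm (hxv i (by omega))
    · exact hv (show i < n + 1 by omega) (show j < n + 1 by omega) hij
  · intro i hi j hj hij
    simp only [Set.mem_Iio, update_apply] at hi hj hij
    split_ifs at hij with h1 h2 h2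
    · omega
    · exact absurd hij (hye j (by omega))
    · exact absurd hij.symm (hye i (by omega))
    · exact he (show i < n + 1 by omega) (show j < n + 1 by omega) hij
  · intro i hi j hj
    simp only [update_apply]
    split_ifs with h1 h2 h2
    · simp [h1, h2, hxy]
    · subst h1
      by_cases hjn : j = n
      · simp [hjn, hxn]
      · exact iff_of_false (hx j (by omega)) (by omega)
    · exact iff_of_false (hy i (by omega)) (by omega)
    · exact hinc i (by omega) j (by omega)

end StrongPath

theorem ZMod.eq_add_one_iff_val {m : ℕ} [NeZero m] (a b : ZMod m) :
    a = b + 1 ↔ a.val = b.val + 1 ∨ (a.val = 0 ∧ b.val + 1 = m) := by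
  have ha := ZMod.val_lt a
  have hb := ZMod.val_lt b
  conv_lhs => rw [← ZMod.natCast_zmod_val a, ← ZMod.natCast_zmod_val b, ← Nat.cast_one,
    ← Nat.cast_add, ZMod.natCast_eq_natCast_iff', Nat.mod_eq_of_lt ha]
  rcases (by omega : b.val + 1 < m ∨ b.val + 1 = m) with hlt | heq
  · rw [Nat.mod_eq_of_lt hlt]; omega
  · rw [heq, Nat.mod_self]; omega

section StrongCycle

variable {A B : Type} {Inc : A → B → Prop}

theorem isStrongCycle_of_nat {m : ℕ} [NeZero m] {w : ℕ → A} {f : ℕ → B}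
    (hw : Set.InjOn w (Set.Iio m)) (hf : Set.InjOn f (Set.Iio m))
    (hinc : ∀ s < m, ∀ t < m,
      Inc (w s) (f t) ↔ s = t ∨ s = t + 1 ∨ (s = 0 ∧ t + 1 = m)) :
    IsStrongCycle Inc m (fun z => w z.val) (fun z => f z.val) := by
  refine ⟨fun a b h => ZMod.val_injective m (hw (ZMod.val_lt a) (ZMod.val_lt b) h),
    fun a b h => ZMod.val_injective m (hf (ZMod.val_lt a) (ZMod.val_lt b) h), fun a b => ?_⟩
  rw [hinc _ (ZMod.val_lt a) _ (ZMod.val_lt b), ZMod.eq_add_one_iff_val,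
    ← (ZMod.val_injective m).eq_iff]

theorem IsStrongPathFn.exists_isStrongCycle_of_chords {n J : ℕ} {v : ℕ → A} {e : ℕ → B}
    {x : A} (hp : IsStrongPathFn Inc (n + 1) v e) (hJ : J < n)
    (hx : ∀ i, J < i → i ≤ n → x ≠ v i)
    (hxJ : Inc x (e J)) (hxn : Inc x (e n)) (hgap : ∀ j, J < j → j < n → ¬ Inc x (e j)) :
    ∃ w f, IsStrongCycle Inc (n - J + 1) w f ∧
      ∀ z, w z = x ∨ ∃ i, J < i ∧ i ≤ n ∧ w z = v i := by
  obtain ⟨hv, he, hinc⟩ := hp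
  set w : ℕ → A := fun s => if s = 0 then x else v (J + s)
  refine ⟨_, _, isStrongCycle_of_nat (w := w) (f := fun t => e (J + t)) ?_ ?_ ?_, fun z => ?_⟩
  · intro s hs t ht hst
    simp only [Set.mem_Iio, w] at hs ht hst
    split_ifs at hst with h1 h2 h2
    · omega
    · exact absurd hst (hx (J + t) (by omega) (by omega))
    · exact absurd hst.symm (hx (J + s) (by omega) (by omega))
    · have := hv (show J + s < n + 1 by omega) (show J + t < n + 1 by omega) hst
      omega
  · intro s hs t ht hst
    simp only [Set.mem_Iio] at hs ht
    have := he (show J + s < n + 1 by omega) (show J + t < n + 1 by omega) hst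
    omega
  · intro s hs t ht
    simp only [w]
    split_ifs with hs0
    · subst hs0
      rcases (by omega : t = 0 ∨ J + t = n ∨ (0 < t ∧ J + t < n)) with
        rfl | htn | ⟨ht0, htn⟩
      · simpa using hxJ
      · exact iff_of_true (htn ▸ hxn) (by omega)
      · exact iff_of_false (hgap (J + t) (by omega) htn) (by omega)
    · rw [hinc _ (by omega) _ (by omega)]
      omega
  · simp only [w]
    split_ifs with hz
    · exact Or.inl rfl
    · exact Or.inr ⟨J + z.val, by omega, by have := ZMod.val_lt z; omega, rfl⟩

end StrongCycle

section Assignment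

variable {A B : Type} {Inc : A → B → Prop} {x₀ : A} {R : Set A} {σ : A → Option B}

def FollowsAssignment (R : Set A) (σ : A → Option B) (n : ℕ) (v : ℕ → A) (e : ℕ → B) :
    Prop :=
  ∀ i < n, v i ∈ R ∧ σ (v i) = if i % 2 = 0 then some (e i) else none

namespace FollowsAssignment

variable {n : ℕ} {v : ℕ → A} {e : ℕ → B}

theorem succ (h : FollowsAssignment R σ n v e)
    (hn : v n ∈ R ∧ σ (v n) = if n % 2 = 0 then some (e n) else none) :
    FollowsAssignment R σ (n + 1) v e := fun i hi =>
  (Nat.lt_succ_iff_lt_or_eq.1 hi).elim (h i) (· ▸ hn)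

theorem update (h : FollowsAssignment R σ n v e) {k : ℕ} (hk : n ≤ k) (x : A) (y : B) :
    FollowsAssignment R σ n (update v k x) (update e k y) := fun i hi => by
  rw [update_of_ne (by omega), update_of_ne (by omega)]
  exact h i hi

theorem mem_and_sigma_eq_none (h : FollowsAssignment R σ n v e) (hA : IsAssignmentH Inc x₀ R σ)
    (hp : IsStrongPathFn Inc (n + 1) v e) (hn : n % 2 = 1) : v n ∈ R ∧ σ (v n) = none := by
  have hprev := h (n - 1) (by omega)
  rw [if_pos (by omega)] at hprev
  refine (hA.C1 _ hprev.1 _ hprev.2).2 (v n) ((hp.2.2 n (by omega) (n - 1) (by omega)).2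
    (Or.inr (by omega))) fun hvn => ?_
  have := hp.1 (show n < n + 1 by omega) (show n - 1 < n + 1 by omega) hvn
  omega

variable {u : A} {g : B}

theorem ne_of_inc_last (h : FollowsAssignment R σ (n + 1) v e)
    (hp : IsStrongPathFn Inc (n + 1) v e) (hn : n % 2 = 1) (hu : Inc u (e n))
    (hσu : σ u = some g) : ∀ i ≤ n, u ≠ v i := by
  rintro i hi rfl
  rcases hi.lt_or_eq with hi | rfl
  · have := (hp.2.2 i (by omega) n (by omega)).1 hu
    omega
  · have := (h i (by omega)).2
    rw [if_neg (by omega), hσu] at this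
    exact Option.some_ne_none g this

theorem not_inc_of_sigma_eq_some (h : FollowsAssignment R σ (n + 1) v e)
    (hA : IsAssignmentH Inc x₀ R σ)
    (hp : IsStrongPathFn Inc (n + 1) v e) (hn : n % 2 = 1) (huR : u ∈ R) (hu : Inc u (e n))
    (hσu : σ u = some g) : ∀ i ≤ n, ¬ Inc (v i) g := by
  intro i hi hvg
  have hfresh := h.ne_of_inc_last hp hn hu hσu
  have hσvi : σ (v i) = none := ((hA.C1 u huR g hσu).2 (v i) hvg (hfresh i hi).symm).2
  have hvi := h i (by omega)
  rcases Nat.mod_two_eq_zero_or_one i with hi0 | hi1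
  · rw [if_pos hi0, hσvi] at hvi
    exact Option.some_ne_none _ hvi.2.symm
  · -- `v (i - 1)` and `u` both lie in `N_σ(v i)`
    have hprev := h (i - 1) (by omega)
    rw [if_pos (by omega)] at hprev
    have hne : v (i - 1) ≠ v i := fun hh => by
      have := hp.1 (show i - 1 < n + 1 by omega) (show i < n + 1 by omega) hh
      omega
    have hinc : Inc (v i) (e (i - 1)) :=
      (hp.2.2 i (by omega) (i - 1) (by omega)).2 (Or.inr (by omega))
    exact hfresh (i - 1) (by omega)
      (hA.C3 (v i) hvi.1 ⟨hfresh i hi, g, hσu, hvg⟩ ⟨hne, e (i - 1), hprev.2, hinc⟩)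

theorem not_inc_of_even (h : FollowsAssignment R σ (n + 1) v e) (hA : IsAssignmentH Inc x₀ R σ)
    {j : ℕ} (hj : j ≤ n) (hj0 : j % 2 = 0) (hσu : σ u = some g) (hfresh : u ≠ v j) :
    ¬ Inc u (e j) := by
  intro hinc
  have hvj := h j (by omega)
  rw [if_pos hj0] at hvj
  have := ((hA.C1 (v j) hvj.1 (e j) hvj.2).2 u hinc hfresh).2
  rw [hσu] at this
  exact Option.some_ne_none g this

end FollowsAssignment

end Assignment

section Extension

variable {V E : Type} {Inc : V → E → Prop} {U : Set V}

theorem IncExt.eq_he0 {β : Eh V E U} (h : IncExt Inc U hv0 β) : β = he0 := by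
  rcases β with _ | ε | y
  · rfl
  all_goals exact h.elim

theorem IncExt.eq_hv1 {x : Vh V} (h : IncExt Inc U x he0) (hx : x ≠ hv0) : x = hv1 := by
  rcases x with _ | _ | y
  · exact absurd rfl hx
  · rfl
  · exact h.elim

theorem exists_eq_hemb_of_ne {x : Vh V} (h0 : x ≠ hv0) (h1 : x ≠ hv1) : ∃ y, x = hemb y := by
  rcases x with _ | _ | y
  · exact absurd rfl h0
  · exact absurd rfl h1
  · exact ⟨y, rfl⟩

theorem IncExt.exists_eq_origE {a b : V} {β : Eh V E U} (ha : IncExt Inc U (hemb a) β)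
    (hb : IncExt Inc U (hemb b) β) (hab : a ≠ b) : ∃ ε, β = origE ε := by
  rcases β with _ | ε | y
  · exact ha.elim
  · exact ⟨ε, rfl⟩
  · exact absurd ((show a = y from ha).trans (show b = y from hb).symm) hab

theorem IsStrongCycle.exists_of_incExt {m : ℕ} (hm : 1 < m) {w : ZMod m → Vh V}
    {f : ZMod m → Eh V E U} (hc : IsStrongCycle (IncExt Inc U) m w f)
    (hw : ∀ z, ∃ x, w z = hemb x) : ∃ w' f', IsStrongCycle Inc m w' f' := by
  have : Fact (1 < m) := ⟨hm⟩
  obtain ⟨hwinj, hfinj, hinc⟩ := hc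
  choose x hx using hw
  have hf : ∀ z, ∃ ε, f z = origE ε := fun z =>
    IncExt.exists_eq_origE (hx z ▸ (hinc z z).2 (Or.inl rfl))
      (hx (z + 1) ▸ (hinc (z + 1) z).2 (Or.inr rfl))
      fun hxz => one_ne_zero (left_eq_add.1 (hwinj (by rw [hx, hx, hxz])))
  choose ε hε using hf
  refine ⟨x, ε, fun a b hab => hwinj (by rw [hx, hx, hab]),
    fun a b hab => hfinj (by rw [hε, hε, hab]), fun i j => ?_⟩
  rw [← hinc, hx, hε]
  rfl

variable {R : Set (Vh V)} {σ : Vh V → Option (Eh V E U)} {n : ℕ}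
  {v : ℕ → Vh V} {e : ℕ → Eh V E U}

theorem IsStrongPathFn.exists_eq_hemb (hp : IsStrongPathFn (IncExt Inc U) (n + 1) v e)
    (hn : 1 ≤ n) (h0v : v 0 = hv0) (h0e : e 0 = he0) {x : Vh V} (hx0 : x ≠ v 0)
    (hx1 : x ≠ v 1) : ∃ y, x = hemb y := by
  have h1v : v 1 = hv1 := IncExt.eq_hv1 (h0e ▸ (hp.2.2 1 (by omega) 0 (by omega)).2 (Or.inr rfl))
    fun h1 => by
      have := hp.1 (show 1 < n + 1 by omega) (show 0 < n + 1 by omega) (h1.trans h0v.symm)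
      omega
  exact exists_eq_hemb_of_ne (h0v ▸ hx0) (h1v ▸ hx1)

theorem FollowsAssignment.not_inc_of_lt (h : FollowsAssignment R σ (n + 1) v e)
    (hbal : BalancedInc Inc) (hA : IsAssignmentH (IncExt Inc U) hv0 R σ)
    (hp : IsStrongPathFn (IncExt Inc U) (n + 1) v e) (hn : n % 2 = 1)
    (h0v : v 0 = hv0) (h0e : e 0 = he0) {u : Vh V} {g : Eh V E U}
    (hu : IncExt Inc U u (e n)) (hσu : σ u = some g) : ∀ j < n, ¬ IncExt Inc U u (e j) := by
  classical
  intro j hj hinc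
  have hfresh := h.ne_of_inc_last hp hn hu hσu
  set P : ℕ → Prop := fun j => IncExt Inc U u (e j)
  set J := Nat.findGreatest P (n - 1)
  have hJ : P J := Nat.findGreatest_spec (by omega : j ≤ n - 1) hinc
  have hJn : J < n := by have := Nat.findGreatest_le (P := P) (n - 1); omega
  have hJodd : J % 2 = 1 := by
    by_contra hJ0
    exact h.not_inc_of_even hA hJn.le (by omega) hσu (hfresh J hJn.le) hJ
  obtain ⟨w, f, hc, hw⟩ :=
    hp.exists_isStrongCycle_of_chords hJn (fun i _ hi => hfresh i hi) hJ hu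
    fun i h1 h2 => Nat.findGreatest_is_greatest h1 (by omega)
  -- the cycle avoids `v₀ = v 0` and `v₁ = v 1`, so it is a strong odd cycle of `H`
  have hvi : ∀ i, 2 ≤ i → i ≤ n → ∀ k < 2, v i ≠ v k := fun i h2 hin k hk hvk => by
    have := hp.1 (show i < n + 1 by omega) (show k < n + 1 by omega) hvk
    omega
  obtain ⟨w', f', hc'⟩ := hc.exists_of_incExt (by omega) fun z => by
    rcases hw z with hz | ⟨i, hJi, hin, hz⟩
    · exact hp.exists_eq_hemb (by omega) h0v h0e (hz ▸ hfresh 0 (by omega))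
        (hz ▸ hfresh 1 (by omega))
    · exact hp.exists_eq_hemb (by omega) h0v h0e (hz ▸ hvi i (by omega) hin 0 (by omega))
        (hz ▸ hvi i (by omega) hin 1 (by omega))
  exact hbal _ (by omega) (Nat.odd_iff.2 (by omega)) w' f' hc'

theorem FollowsAssignment.exists_response (h : FollowsAssignment R σ n v e)
    (hbal : BalancedInc Inc) (hA : IsAssignmentH (IncExt Inc U) hv0 R σ)
    (hp : IsStrongPathFn (IncExt Inc U) (n + 1) v e) (hn : n % 2 = 1)
    (h0v : v 0 = hv0) (h0e : e 0 = he0) :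
    ∃ u g, IsStrongPathFn (IncExt Inc U) (n + 2)
        (Function.update v (n + 1) u) (Function.update e (n + 1) g) ∧
      FollowsAssignment R σ (n + 2)
        (Function.update v (n + 1) u) (Function.update e (n + 1) g) := by
  obtain ⟨hvR, hvσ⟩ := h.mem_and_sigma_eq_none hA hp hn
  have h' : FollowsAssignment R σ (n + 1) v e := h.succ ⟨hvR, by rw [if_neg (by omega), hvσ]⟩
  obtain ⟨u, hu, huR, hσu⟩ :=
    hA.C2 (v n) hvR hvσ (e n) ((hp.2.2 n (by omega) n (by omega)).2 (Or.inl rfl))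
  obtain ⟨g, hg⟩ := Option.ne_none_iff_exists'.1 hσu
  refine ⟨u, g, hp.update_succ (hA.C1 u huR g hg).1 hu
    (h'.not_inc_of_lt hbal hA hp hn h0v h0e hu hg)
    (h'.not_inc_of_sigma_eq_some hA hp hn huR hu hg),
    (h'.update le_rfl u g).succ ?_⟩
  simp only [update_self, if_pos (show (n + 1) % 2 = 0 by omega)]
  exact ⟨huR, hg⟩

end Extension

section Game

theorem winAuxH_succ_reverse_iff {A B : Type} {Inc : A → B → Prop} {n : ℕ}
    {L : List (A × B)} : winAuxH Inc (n + 1) L.reverse ↔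
      ∃ x y, IsStrongPathL Inc (L ++ [(x, y)]) ∧ ¬ winAuxH Inc n (L ++ [(x, y)]).reverse := by
  simp [winAuxH]

theorem ncard_notMem_append {A B : Type} [Finite A] {L : List (A × B)} {x : A} (y : B)
    (hx : x ∉ L.map Prod.fst) :
    {a | a ∉ (L ++ [(x, y)]).map Prod.fst}.ncard + 1 = {a | a ∉ L.map Prod.fst}.ncard := by
  have : {a | a ∉ (L ++ [(x, y)]).map Prod.fst} = {a | a ∉ L.map Prod.fst} \ {x} := by
    ext a
    simp [and_comm]
  rw [this, Set.ncard_sdiff_singleton_add_one hx]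

variable {V E : Type} [Finite V] {Inc : V → E → Prop} {U : Set V}
  {R : Set (Vh V)} {σ : Vh V → Option (Eh V E U)}

theorem not_winAuxH_of_followsAssignment (hbal : BalancedInc Inc)
    (hA : IsAssignmentH (IncExt Inc U) hv0 R σ) (n : ℕ) :
    ∀ L : List (Vh V × Eh V E U), n = {a | a ∉ L.map Prod.fst}.ncard → L.length % 2 = 1 →
      L.head? = some (hv0, he0) →
      FollowsAssignment R σ L.length (L.map Prod.fst).getI (L.map Prod.snd).getI →
      ¬ winAuxH (IncExt Inc U) n L.reverse := by
  induction n using Nat.strong_induction_on with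
  | _ n IH =>
  intro L hn hodd hhead h hwin
  rcases n with _ | n
  · exact hwin
  obtain ⟨w, f, hmove, hlose⟩ := winAuxH_succ_reverse_iff.1 hwin
  have hw := hmove.notMem_of_append
  rw [isStrongPathL_append_singleton_iff] at hmove
  obtain ⟨h0v, h0e⟩ : (L.map Prod.fst).getI 0 = hv0 ∧ (L.map Prod.snd).getI 0 = he0 := by
    obtain ⟨M, rfl⟩ := List.head?_eq_some_iff.1 hhead
    exact ⟨rfl, rfl⟩
  have hL : L.length ≠ 0 := by omega
  obtain ⟨u, g, hp, hinv⟩ := (h.update le_rfl w f).exists_response hbal hA hmove hodd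
    ((update_of_ne hL.symm _ _).trans h0v) ((update_of_ne hL.symm _ _).trans h0e)
  have hp' : IsStrongPathL (IncExt Inc U) (L ++ [(w, f)] ++ [(u, g)]) := by
    simpa only [isStrongPathL_append_singleton_iff, List.getI_map_append_singleton,
      List.length_append, List.length_singleton] using hp
  -- the fuel stays the number of unused hypervertices, and Player 2 uses up one of them
  have hcard₁ := ncard_notMem_append f hw
  have hcard₂ := ncard_notMem_append g hp'.notMem_of_append
  obtain rfl : n = {a | a ∉ (L ++ [(w, f)] ++ [(u, g)]).map Prod.fst}.ncard + 1 := by omega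
  refine hlose (winAuxH_succ_reverse_iff.2 ⟨u, g, hp', IH _ (by omega) _ rfl ?_ ?_ ?_⟩)
  · simp only [List.length_append, List.length_singleton]; omega
  · simp [hhead]
  · simpa only [List.getI_map_append_singleton, List.length_append, List.length_singleton]
      using hinv

end Game

theorem stmt13_general {V E : Type} [Fintype V]
    (Inc : V → E → Prop) (U : Set V)
    (hbal : BalancedInc Inc)
    (R : Set (Vh V)) (σ : Vh V → Option (Eh V E U))
    (hA : IsAssignmentH (IncExt Inc U) hv0 R σ)
    (h : σ hv0 ≠ none) :
    ¬ WinPosH (IncExt Inc U) [(hv0, he0)] := by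
  obtain ⟨b, hb⟩ := Option.ne_none_iff_exists'.1 h
  obtain rfl : b = he0 := IncExt.eq_he0 (hA.C1 hv0 hA.mem b hb).1
  refine not_winAuxH_of_followsAssignment hbal hA _ [(hv0, he0)] rfl rfl rfl fun i hi => ?_
  obtain rfl : i = 0 := by simpa using hi
  exact ⟨hA.mem, hb⟩

/-- Proposition 5 (2): let `H` be a balanced hypergraph with an independent transversal
`U`, and let `(R, σ)` be an assignment for `(H', v₀)`.  If `σ(v₀) ≠ ⊥`, then Player 2
has a winning strategy in the game `𝒢(H', v₀)`, i.e. the initial position `v₀ e₀` is a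
loss for the player to move. -/
theorem stmt13 {V E : Type} [Fintype V] [Fintype E]
    (Inc : V → E → Prop) (U : Set V)
    (hbal : BalancedInc Inc)
    (hUcov : ∀ e : E, ∃ u ∈ U, Inc u e)
    (hUsplit : ∀ e : E, {u | u ∈ U ∧ Inc u e}.Subsingleton)
    (R : Set (Vh V)) (σ : Vh V → Option (Eh V E U))
    (hA : IsAssignmentH (IncExt Inc U) hv0 R σ)
    (h : σ hv0 ≠ none) :
    ¬ WinPosH (IncExt Inc U) [(hv0, he0)] :=
  stmt13_general Inc U hbal R σ hA h
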